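/- arXiv:2102.03922 — 2 statements merged into one kernel-verified Lean document; each statement's English description precedes it below -/
import Mathlib

section
/- Let F be a finite field with exactly q elements, V an F-vector space of dimension r, and D ⊆ V a subspace of dimension n. For natural numbers i ≤ j with i ≤ n and j − i ≤ r − n, the number of j-dimensional subspaces α ⊆ V with dim(α ∩ D) = i equals q^{(j−i)(n−i)} · 𝔤(i,n) · 𝔤(j−i,r−n), where 𝔤(k,l) = \prod_{m=1}^{k}(q^l − q^{m−1})/(q^k − q^{m−1}) is the number of k-dimensional subspaces of an l-dimensional F-vector space. -/
/-- The Gaussian number `𝔤(k,l) = ∏_{m=1}^{k} (q^l − q^{m−1})/(q^k − q^{m−1})`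
(as a rational number), which counts the `k`-dimensional subspaces of an
`l`-dimensional vector space over a field with `q` elements. -/
def gaussGrass (q k l : ℕ) : ℚ :=
  ∏ m ∈ Finset.range k, ((q : ℚ) ^ l - (q : ℚ) ^ m) / ((q : ℚ) ^ k - (q : ℚ) ^ m)

section Aux

open Module Submodule Finset
set_option linter.unusedSectionVars false

variable {F : Type*} [Field F] [Fintype F]
variable {V : Type*} [AddCommGroup V] [Module F V] [FiniteDimensional F V]

local notation "q" => Fintype.card F

/-- Tuples with linearly independent image in the quotient, counted via a linear section. -/
lemma card_li_quot (D : Submodule F V) (l : ℕ) (hl : l ≤ finrank F (V ⧸ D)) :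
    Nat.card {u : Fin l → V // LinearIndependent F (D.mkQ ∘ u)} =
      q ^ (finrank F D * l) * ∏ m ∈ range l, (q ^ finrank F (V ⧸ D) - q ^ m) := by
  haveI : Finite V := Module.finite_of_finite F
  obtain ⟨s, hs⟩ := D.mkQ.exists_rightInverse_of_surjective D.range_mkQ
  have hs' : ∀ x, D.mkQ (s x) = x := fun x => congrArg (fun f => f x) (congrArg DFunLike.coe hs)
  have e : {u : Fin l → V // LinearIndependent F (D.mkQ ∘ u)} ≃
      {t : Fin l → V ⧸ D // LinearIndependent F t} × (Fin l → D) :=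
    { toFun := fun u => (⟨D.mkQ ∘ u.1, u.2⟩,
        fun k => ⟨u.1 k - s (D.mkQ (u.1 k)), by
          rw [← Submodule.Quotient.mk_eq_zero, ← Submodule.mkQ_apply, map_sub, hs', sub_self]⟩),
      invFun := fun p => ⟨fun k => s (p.1.1 k) + (p.2 k : V), by
        have : D.mkQ ∘ (fun k => s (p.1.1 k) + (p.2 k : V)) = p.1.1 := by
          funext k
          simp only [Function.comp_apply, map_add, hs']
          rw [show D.mkQ (p.2 k : V) = 0 from (Submodule.Quotient.mk_eq_zero D).mpr (p.2 k).2]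
          simp
        rw [this]; exact p.1.2⟩,
      left_inv := fun u => by
        apply Subtype.ext; funext k; simp,
      right_inv := fun p => by
        refine Prod.ext (Subtype.ext ?_) ?_
        · funext k
          simp only [Function.comp_apply, map_add, hs']
          rw [show D.mkQ (p.2 k : V) = 0 from (Submodule.Quotient.mk_eq_zero D).mpr (p.2 k).2]
          simp
        · funext k
          apply Subtype.ext
          simp only [map_add, hs']
          rw [show D.mkQ (p.2 k : V) = 0 from (Submodule.Quotient.mk_eq_zero D).mpr (p.2 k).2]
          simp }
  haveI : Finite (V ⧸ D) := Module.finite_of_finite F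
  rw [Nat.card_congr e, Nat.card_prod, card_linearIndependent hl]
  have : Nat.card (Fin l → D) = q ^ (finrank F D * l) := by
    haveI : Finite D := Module.finite_of_finite F
    haveI : Fintype D := Fintype.ofFinite _
    rw [Nat.card_eq_fintype_card, Fintype.card_fun, card_eq_pow_finrank (K := F) (V := D),
      Fintype.card_fin, ← pow_mul]
  rw [this, mul_comm]
  congr 1
  exact Fin.prod_univ_eq_prod_range (fun m => q ^ finrank F (V ⧸ D) - q ^ m) l

/-- Counting pairs (LI tuple in `E`, tuple with LI image in `V⧸E`). -/
lemma card_TT (E : Submodule F V) (k l : ℕ) (hk : k ≤ finrank F E)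
    (hl : l ≤ finrank F (V ⧸ E)) :
    Nat.card {w : (Fin k → E) × (Fin l → V) //
        LinearIndependent F w.1 ∧ LinearIndependent F (E.mkQ ∘ w.2)} =
      (∏ m ∈ range k, (q ^ finrank F E - q ^ m)) *
        (q ^ (finrank F E * l) * ∏ m ∈ range l, (q ^ finrank F (V ⧸ E) - q ^ m)) := by
  haveI : Finite E := Module.finite_of_finite F
  have e2 : {w : (Fin k → E) × (Fin l → V) //
      LinearIndependent F w.1 ∧ LinearIndependent F (⇑E.mkQ ∘ w.2)} ≃
      {f : Fin k → E // LinearIndependent F f} ×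
        {u : Fin l → V // LinearIndependent F (⇑E.mkQ ∘ u)} :=
    @Equiv.subtypeProdEquivProd (Fin k → E) (Fin l → V)
      (fun f => LinearIndependent F f) (fun u => LinearIndependent F (⇑E.mkQ ∘ u))
  rw [Nat.card_congr e2, Nat.card_prod,
    card_linearIndependent hk, card_li_quot E l hl]
  congr 1
  exact Fin.prod_univ_eq_prod_range (fun m => q ^ finrank F E - q ^ m) k

section SpanLemmas

variable {D : Submodule F V} {k l : ℕ} {f : Fin k → D} {u : Fin l → V}

lemma li_of_li_mkQ (hu : LinearIndependent F (D.mkQ ∘ u)) : LinearIndependent F u :=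
  LinearIndependent.of_comp D.mkQ hu

lemma disjoint_span_of_li_mkQ (hu : LinearIndependent F (D.mkQ ∘ u)) :
    Disjoint D (span F (Set.range u)) := by
  rw [Submodule.disjoint_def]
  intro x hxD hxs
  obtain ⟨c, hc⟩ := (mem_span_range_iff_exists_fun F).mp hxs
  have h0 : ∑ m, c m • (D.mkQ ∘ u) m = 0 := by
    simp only [Function.comp_apply, ← map_smul, ← map_sum, hc]
    exact (Submodule.Quotient.mk_eq_zero D).mpr hxD
  have := Fintype.linearIndependent_iff.mp hu c h0
  rw [← hc]
  simp [this]

/-- The combined family is linearly independent. -/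
lemma li_sum (hf : LinearIndependent F f) (hu : LinearIndependent F (D.mkQ ∘ u)) :
    LinearIndependent F (Sum.elim (fun m => (f m : V)) u) := by
  refine LinearIndependent.sum_type (hf.map' D.subtype (Submodule.ker_subtype D))
    (li_of_li_mkQ hu) ?_
  refine Disjoint.mono_left ?_ (disjoint_span_of_li_mkQ hu)
  rw [Submodule.span_le]
  rintro x ⟨m, rfl⟩
  exact (f m).2

lemma finrank_span_sum (hf : LinearIndependent F f) (hu : LinearIndependent F (D.mkQ ∘ u)) :
    finrank F (span F (Set.range (Sum.elim (fun m => (f m : V)) u))) = k + l := by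
  rw [finrank_span_eq_card (li_sum hf hu)]
  simp

lemma finrank_span_sum_inf (hf : LinearIndependent F f)
    (hu : LinearIndependent F (D.mkQ ∘ u)) :
    finrank F ((span F (Set.range (Sum.elim (fun m => (f m : V)) u)) ⊓ D : Submodule F V)) =
      k := by
  set g := Sum.elim (fun m => (f m : V)) u with hg
  have hrange : Set.range g = Set.range (fun m => (f m : V)) ∪ Set.range u :=
    Set.Sum.elim_range _ _
  have hspan : span F (Set.range g) = span F (Set.range (fun m => (f m : V))) ⊔
      span F (Set.range u) := by rw [hrange, Submodule.span_union]
  have hfD : span F (Set.range (fun m => (f m : V))) ≤ D := by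
    rw [Submodule.span_le]; rintro x ⟨m, rfl⟩; exact (f m).2
  have h1 : finrank F (span F (Set.range g) ⊔ D : Submodule F V) +
      finrank F (span F (Set.range g) ⊓ D : Submodule F V) =
      finrank F (span F (Set.range g)) + finrank F D :=
    Submodule.finrank_sup_add_finrank_inf_eq _ _
  have hsupD : (span F (Set.range g) ⊔ D : Submodule F V) = span F (Set.range u) ⊔ D := by
    rw [hspan, sup_assoc, sup_comm (span F (Set.range u)) D, ← sup_assoc,
      sup_eq_right.mpr hfD, sup_comm]
  have h2 : finrank F (span F (Set.range u) ⊔ D : Submodule F V) +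
      finrank F (span F (Set.range u) ⊓ D : Submodule F V) =
      finrank F (span F (Set.range u)) + finrank F D :=
    Submodule.finrank_sup_add_finrank_inf_eq _ _
  have hinf0 : (span F (Set.range u) ⊓ D : Submodule F V) = ⊥ := by
    rw [inf_comm]
    exact disjoint_iff.mp (disjoint_span_of_li_mkQ hu)
  have hfu : finrank F (span F (Set.range u)) = l := by
    rw [finrank_span_eq_card (li_of_li_mkQ hu), Fintype.card_fin]
  have hfg : finrank F (span F (Set.range g)) = k + l := finrank_span_sum hf hu
  rw [hsupD] at h1
  rw [hinf0, finrank_bot, hfu] at h2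
  omega

end SpanLemmas

lemma card_fiber (D α : Submodule F V) {k l : ℕ} (hαj : finrank F α = k + l)
    (hαi : finrank F (α ⊓ D : Submodule F V) = k) :
    Nat.card {x : {w : (Fin k → D) × (Fin l → V) //
        LinearIndependent F w.1 ∧ LinearIndependent F (⇑D.mkQ ∘ w.2)} //
        span F (Set.range (Sum.elim (fun m => ((x : _).1.1 m : V)) (x : _).1.2)) = α} =
      (∏ m ∈ range k, (q ^ k - q ^ m)) * (q ^ (k * l) * ∏ m ∈ range l, (q ^ l - q ^ m)) := by
  set E : Submodule F α := comap α.subtype D with hEdef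
  have e1 : comap α.subtype (α ⊓ D) = E := by
    ext x
    simp only [Submodule.mem_comap, Submodule.subtype_apply, Submodule.mem_inf, x.2, true_and,
      hEdef]
  have hE : finrank F E = k := by
    rw [← e1, LinearEquiv.finrank_eq (Submodule.comapSubtypeEquivOfLe inf_le_left), hαi]
  have hQ : finrank F (α ⧸ E) = l := by
    have := Submodule.finrank_quotient_add_finrank E
    rw [hE, hαj] at this
    omega
  -- the inclusion `E →ₗ D`
  let ψ : E →ₗ[F] D :=
    { toFun := fun x => ⟨((x : α) : V), x.2⟩
      map_add' := fun x y => rfl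
      map_smul' := fun c x => rfl }
  have hψker : LinearMap.ker ψ = ⊥ := by
    rw [LinearMap.ker_eq_bot']
    intro m hm
    have : ((m : α) : V) = 0 := congrArg Subtype.val hm
    exact Subtype.ext (Subtype.ext this)
  -- the induced injection `α ⧸ E →ₗ V ⧸ D`
  let φ : (α ⧸ E) →ₗ[F] V ⧸ D := Submodule.mapQ E D α.subtype le_rfl
  have hφker : LinearMap.ker φ = ⊥ := by
    rw [LinearMap.ker_eq_bot']
    intro m hm
    obtain ⟨x, rfl⟩ := Submodule.Quotient.mk_surjective E m
    rw [show (Submodule.Quotient.mk x : α ⧸ E) = E.mkQ x from rfl]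
    rw [Submodule.mapQ_apply] at hm
    rw [Submodule.Quotient.mk_eq_zero] at hm
    rw [Submodule.mkQ_apply, Submodule.Quotient.mk_eq_zero]
    exact hm
  have hLI1 : ∀ f' : Fin k → E, LinearIndependent F (⇑ψ ∘ f') ↔ LinearIndependent F f' :=
    fun f' => ψ.linearIndependent_iff hψker
  have hLI2 : ∀ u' : Fin l → α,
      LinearIndependent F (⇑D.mkQ ∘ fun m => ((u' m : α) : V)) ↔
        LinearIndependent F (⇑E.mkQ ∘ u') := by
    intro u'
    have hcomm : (⇑D.mkQ ∘ fun m => ((u' m : α) : V)) = ⇑φ ∘ (⇑E.mkQ ∘ u') := by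
      funext m
      simp only [Function.comp_apply, Submodule.mkQ_apply, φ]
      rw [Submodule.mapQ_apply, Submodule.subtype_apply]
    rw [hcomm]
    exact φ.linearIndependent_iff hφker
  have mems : ∀ w : {w : (Fin k → D) × (Fin l → V) //
        LinearIndependent F w.1 ∧ LinearIndependent F (⇑D.mkQ ∘ w.2)},
      span F (Set.range (Sum.elim (fun m => (w.1.1 m : V)) w.1.2)) = α →
      (∀ m, (w.1.1 m : V) ∈ α) ∧ (∀ m, w.1.2 m ∈ α) := by
    intro w h
    constructor
    · intro m; rw [← h]; exact subset_span ⟨Sum.inl m, rfl⟩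
    · intro m; rw [← h]; exact subset_span ⟨Sum.inr m, rfl⟩
  have spaneq : ∀ w : {w : (Fin k → D) × (Fin l → V) //
        LinearIndependent F w.1 ∧ LinearIndependent F (⇑D.mkQ ∘ w.2)},
      (∀ m, (w.1.1 m : V) ∈ α) → (∀ m, w.1.2 m ∈ α) →
      span F (Set.range (Sum.elim (fun m => (w.1.1 m : V)) w.1.2)) = α := by
    intro w h1 h2
    apply Submodule.eq_of_le_of_finrank_le
    · rw [Submodule.span_le]
      rintro x ⟨m | m, rfl⟩
      · exact h1 m
      · exact h2 m
    · rw [hαj, finrank_span_sum w.2.1 w.2.2]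
  have e : {x : {w : (Fin k → D) × (Fin l → V) //
        LinearIndependent F w.1 ∧ LinearIndependent F (⇑D.mkQ ∘ w.2)} //
        span F (Set.range (Sum.elim (fun m => ((x : _).1.1 m : V)) (x : _).1.2)) = α} ≃
      {p : (Fin k → E) × (Fin l → α) //
        LinearIndependent F p.1 ∧ LinearIndependent F (⇑E.mkQ ∘ p.2)} :=
    { toFun := fun x =>
        ⟨(fun m => ⟨⟨(x.1.1.1 m : V), (mems x.1 x.2).1 m⟩, (x.1.1.1 m).2⟩,
          fun m => ⟨x.1.1.2 m, (mems x.1 x.2).2 m⟩),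
          by
            constructor
            · rw [← hLI1]
              have : (⇑ψ ∘ fun m =>
                  (⟨⟨(x.1.1.1 m : V), (mems x.1 x.2).1 m⟩, (x.1.1.1 m).2⟩ : E)) = x.1.1.1 :=
                funext fun m => Subtype.ext rfl
              rw [this]; exact x.1.2.1
            · rw [← hLI2]
              exact x.1.2.2⟩
      invFun := fun p =>
        ⟨⟨(fun m => ψ (p.1.1 m), fun m => ((p.1.2 m : α) : V)),
          ⟨(hLI1 _).mpr p.2.1, (hLI2 _).mpr p.2.2⟩⟩,
          spaneq _ (fun m => ((p.1.1 m : α)).2) (fun m => (p.1.2 m).2)⟩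
      left_inv := fun x => rfl
      right_inv := fun p => rfl }
  rw [Nat.card_congr e, card_TT E k l (le_of_eq hE.symm) (le_of_eq hQ.symm), hE, hQ]

theorem count_subspaces_with_fixed_intersection_dim'
    (q' : ℕ) (hq : Fintype.card F = q')
    (r n i j : ℕ) (hV : Module.finrank F V = r)
    (D : Submodule F V) (hD : Module.finrank F D = n)
    (hij : i ≤ j) (hin : i ≤ n) (hji : j - i ≤ r - n) :
    (Nat.card {α : Submodule F V //
        Module.finrank F α = j ∧ Module.finrank F (α ⊓ D : Submodule F V) = i} : ℚ) =
      (q' : ℚ) ^ ((j - i) * (n - i)) * gaussGrass q' i n * gaussGrass q' (j - i) (r - n) := by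
  subst hq hV hD
  haveI : Finite V := Module.finite_of_finite F
  obtain ⟨l, rfl⟩ : ∃ l, j = i + l := ⟨j - i, by omega⟩
  have hl : i + l - i = l := by omega
  rw [hl] at hji ⊢
  set c := Fintype.card F with hc
  set n := finrank F D with hn
  set r := finrank F V with hr
  have hnr : n ≤ r := Submodule.finrank_le D
  have hquot : finrank F (V ⧸ D) = r - n := by
    have := Submodule.finrank_quotient_add_finrank D
    omega
  have hlq : l ≤ finrank F (V ⧸ D) := by omega
  -- the parametrizing type
  set T := {w : (Fin i → D) × (Fin l → V) //
    LinearIndependent F w.1 ∧ LinearIndependent F (⇑D.mkQ ∘ w.2)} with hT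
  set Ω := {α : Submodule F V // finrank F α = i + l ∧
    finrank F (α ⊓ D : Submodule F V) = i} with hΩ
  let π : T → Ω := fun w =>
    ⟨span F (Set.range (Sum.elim (fun m => (w.1.1 m : V)) w.1.2)),
      finrank_span_sum w.2.1 w.2.2, finrank_span_sum_inf w.2.1 w.2.2⟩
  set C := (∏ m ∈ range i, (c ^ i - c ^ m)) *
    (c ^ (i * l) * ∏ m ∈ range l, (c ^ l - c ^ m)) with hC
  have key : ∀ α' : Ω, Nat.card {x : T // π x = α'} = C := by
    intro α'
    have e0 : {x : T // π x = α'} ≃ {x : T //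
        span F (Set.range (Sum.elim (fun m => (x.1.1 m : V)) x.1.2)) = α'.1} :=
      Equiv.subtypeEquivRight fun x => Subtype.ext_iff
    rw [Nat.card_congr e0]
    exact card_fiber D α'.1 α'.2.1 α'.2.2
  haveI : Finite (Submodule F V) :=
    Finite.of_injective (fun (α : Submodule F V) => (α : Set V)) SetLike.coe_injective
  haveI : Fintype Ω := Fintype.ofFinite _
  haveI : Fintype T := Fintype.ofFinite _
  haveI : ∀ α' : Ω, Fintype {x : T // π x = α'} := fun _ => Fintype.ofFinite _
  have hsum : Nat.card T = Nat.card Ω * C := by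
    calc Nat.card T = Nat.card (Σ α' : Ω, {x : T // π x = α'}) :=
          (Nat.card_congr (Equiv.sigmaFiberEquiv π)).symm
      _ = ∑ α' : Ω, Nat.card {x : T // π x = α'} := by
          rw [Nat.card_eq_fintype_card, Fintype.card_sigma]
          exact Finset.sum_congr rfl fun α' _ => (Nat.card_eq_fintype_card).symm
      _ = ∑ _α' : Ω, C := Finset.sum_congr rfl fun α' _ => key α'
      _ = Nat.card Ω * C := by
          rw [Finset.sum_const, Finset.card_univ, Nat.card_eq_fintype_card, smul_eq_mul]
  have hTcard : Nat.card T = (∏ m ∈ range i, (c ^ n - c ^ m)) *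
      (c ^ (n * l) * ∏ m ∈ range l, (c ^ (r - n) - c ^ m)) := by
    rw [hT, card_TT D i l (hn ▸ hin) hlq, hquot, ← hn]
  rw [hTcard] at hsum
  -- now pure arithmetic over ℚ
  have hc2 : 1 < c := Fintype.one_lt_card
  have castP : ∀ k d : ℕ, k ≤ d →
      ((∏ m ∈ range k, (c ^ d - c ^ m) : ℕ) : ℚ) =
        ∏ m ∈ range k, ((c : ℚ) ^ d - (c : ℚ) ^ m) := by
    intro k d hkd
    rw [Nat.cast_prod]
    refine Finset.prod_congr rfl fun m hm => ?_
    rw [Nat.cast_sub (Nat.pow_le_pow_right (by omega)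
      (le_trans (le_of_lt (Finset.mem_range.mp hm)) hkd))]
    push_cast
    ring
  have Pne : ∀ k : ℕ, (∏ m ∈ range k, ((c : ℚ) ^ k - (c : ℚ) ^ m)) ≠ 0 := by
    intro k
    refine Finset.prod_ne_zero_iff.mpr fun m hm => sub_ne_zero.mpr (ne_of_gt ?_)
    exact pow_lt_pow_right₀ (by exact_mod_cast hc2) (Finset.mem_range.mp hm)
  have hcne : (c : ℚ) ≠ 0 := by positivity
  have hC0 : ((∏ m ∈ range i, ((c : ℚ) ^ i - (c : ℚ) ^ m)) *
      ((c : ℚ) ^ (i * l) * ∏ m ∈ range l, ((c : ℚ) ^ l - (c : ℚ) ^ m))) ≠ 0 :=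
    mul_ne_zero (Pne i) (mul_ne_zero (pow_ne_zero _ hcne) (Pne l))
  have hEQ : (Nat.card Ω : ℚ) *
      ((∏ m ∈ range i, ((c : ℚ) ^ i - (c : ℚ) ^ m)) *
        ((c : ℚ) ^ (i * l) * ∏ m ∈ range l, ((c : ℚ) ^ l - (c : ℚ) ^ m))) =
      (∏ m ∈ range i, ((c : ℚ) ^ n - (c : ℚ) ^ m)) *
        ((c : ℚ) ^ (n * l) * ∏ m ∈ range l, ((c : ℚ) ^ (r - n) - (c : ℚ) ^ m)) := by
    have h2 := congrArg (Nat.cast (R := ℚ)) hsum.symm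
    rw [hC] at h2
    push_cast [castP i i le_rfl, castP l l le_rfl, castP i n hin, castP l (r - n) hji] at h2
    exact h2
  have hpow : (c : ℚ) ^ (n * l) = (c : ℚ) ^ (l * (n - i)) * (c : ℚ) ^ (i * l) := by
    rw [← pow_add]
    congr 1
    rw [mul_comm i l, ← Nat.mul_add, Nat.sub_add_cancel hin, mul_comm]
  have hN : (Nat.card Ω : ℚ) =
      ((∏ m ∈ range i, ((c : ℚ) ^ n - (c : ℚ) ^ m)) *
        ((c : ℚ) ^ (n * l) * ∏ m ∈ range l, ((c : ℚ) ^ (r - n) - (c : ℚ) ^ m))) /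
      ((∏ m ∈ range i, ((c : ℚ) ^ i - (c : ℚ) ^ m)) *
        ((c : ℚ) ^ (i * l) * ∏ m ∈ range l, ((c : ℚ) ^ l - (c : ℚ) ^ m))) := by
    rw [eq_div_iff hC0]; exact hEQ
  simp only [gaussGrass, Finset.prod_div_distrib]
  rw [hN, div_eq_iff hC0, hpow]
  field_simp
  rw [eq_div_iff (mul_ne_zero (Pne i) (Pne l))]
  ring


end Aux

/-- Theorem 2.3.5 + Corollary 2.3.11: for an `r`-dimensional space
`V` over a field with `q` elements and an `n`-dimensional subspace `D`, the
number of `j`-dimensional subspaces `α ⊆ V` with `dim(α ⊓ D) = i` equals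
`q^((j−i)(n−i)) · 𝔤(i,n) · 𝔤(j−i,r−n)`. -/
theorem count_subspaces_with_fixed_intersection_dim
    (F : Type*) [Field F] [Fintype F] (q : ℕ) (hq : Fintype.card F = q)
    (V : Type*) [AddCommGroup V] [Module F V] [FiniteDimensional F V]
    (r n i j : ℕ) (hV : Module.finrank F V = r)
    (D : Submodule F V) (hD : Module.finrank F D = n)
    (hij : i ≤ j) (hin : i ≤ n) (hji : j - i ≤ r - n) :
    (Nat.card {α : Submodule F V //
        Module.finrank F α = j ∧ Module.finrank F (α ⊓ D : Submodule F V) = i} : ℚ) =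
      (q : ℚ) ^ ((j - i) * (n - i)) * gaussGrass q i n * gaussGrass q (j - i) (r - n) := by
  exact count_subspaces_with_fixed_intersection_dim' q hq r n i j hV D hD hij hin hji
end

section
/- Let R be a commutative ring, r ≥ 1 a natural number, and q, fr, Φ_1, …, Φ_{r−1}, T_1, …, T_r elements of R. Set Φ_0 = 1 and T_0 = 1, and suppose that q^{i(i−1)/2}·T_i = q^{(i−1)(i−2)/2}·fr·Φ_{i−1} + q^{i(i−1)/2}·Φ_i for all 1 ≤ i ≤ r−1, and that q^{r(r−1)/2}·T_r = q^{(r−1)(r−2)/2}·fr·Φ_{r−1}. Then \sum_{i=0}^{r} (−1)^i · q^{i(i−1)/2} · T_i · fr^{r−i} = 0. -/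
/-- formulas (2.2.6)/(2.2.7): in a commutative ring, if the
relations `q^{i(i−1)/2} T_i = q^{(i−1)(i−2)/2} fr Φ_{i−1} + q^{i(i−1)/2} Φ_i`
(for `1 ≤ i ≤ r−1`) and `q^{r(r−1)/2} T_r = q^{(r−1)(r−2)/2} fr Φ_{r−1}` hold
(with `Φ_0 = T_0 = 1`), then `fr` is a root of the Hecke polynomial
`∑_{i=0}^{r} (−1)^i q^{i(i−1)/2} T_i X^{r−i}`. -/
theorem frobenius_root_of_hecke_polynomial
    (R : Type*) [CommRing R] (r : ℕ) (hr : 1 ≤ r)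
    (q fr : R) (Φ T : ℕ → R) (hΦ0 : Φ 0 = 1) (hT0 : T 0 = 1)
    (hmid : ∀ i, 1 ≤ i → i ≤ r - 1 →
      q ^ (i * (i - 1) / 2) * T i =
        q ^ ((i - 1) * (i - 2) / 2) * fr * Φ (i - 1) + q ^ (i * (i - 1) / 2) * Φ i)
    (htop : q ^ (r * (r - 1) / 2) * T r = q ^ ((r - 1) * (r - 2) / 2) * fr * Φ (r - 1)) :
    ∑ i ∈ Finset.range (r + 1),
      (-1 : R) ^ i * q ^ (i * (i - 1) / 2) * T i * fr ^ (r - i) = 0 := by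
  obtain ⟨s, rfl⟩ : ∃ s, r = s + 1 := ⟨r - 1, by omega⟩
  set a : ℕ → R := fun i => (-1 : R) ^ i * q ^ (i * (i - 1) / 2) * Φ i * fr ^ (s + 1 - i)
    with ha
  have key : ∀ i ∈ Finset.range s,
      (-1 : R) ^ (i + 1) * q ^ ((i + 1) * (i + 1 - 1) / 2) * T (i + 1)
        * fr ^ (s + 1 - (i + 1)) = a (i + 1) - a i := by
    intro i hi
    simp only [Finset.mem_range] at hi
    have h := hmid (i + 1) (by omega) (by omega)
    have e1 : i + 1 - 1 = i := by omega
    have e2 : i + 1 - 2 = i - 1 := by omega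
    rw [e1, e2] at h
    simp only [ha, e1, Nat.add_sub_add_right]
    have e3 : s + 1 - i = (s - i) + 1 := by omega
    rw [e3, pow_succ]
    linear_combination ((-1 : R) ^ (i + 1) * fr ^ (s - i)) * h
  rw [Finset.sum_range_succ', Finset.sum_range_succ, Finset.sum_congr rfl key,
    Finset.sum_range_sub]
  have h0 : a 0 = fr ^ (s + 1) := by simp [ha, hΦ0]
  have hs : a s = (-1 : R) ^ s * q ^ (s * (s - 1) / 2) * Φ s * fr := by
    simp [ha, Nat.add_sub_cancel_left]
  have e1 : s + 1 - 1 = s := by omega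
  have e2 : s + 1 - 2 = s - 1 := by omega
  rw [e1, e2] at htop
  simp only [pow_zero, Nat.mul_zero, Nat.zero_mul, Nat.sub_self, Nat.zero_div,
    one_mul, hT0, Nat.sub_zero, e1, hs, h0]
  linear_combination ((-1 : R) ^ (s + 1)) * htop
end
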